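/- Let n ≥ 2 and let v be a tree representation on {1,…,n}. Then the graph G(v) produced by the decoding algorithm, with vertex set {1,…,2n}, is a tree (it is connected and has exactly 2n−1 edges), and each of the vertices 1,…,n and the vertex n+1 has degree 1 in G(v). -/

import Mathlib

/-- 0-indexed position of the first occurrence of `x` in `v`. -/
def firstOcc (v : List ℕ) (x : ℕ) : ℕ := v.idxOf x

/-- 0-indexed position of the second (= last, when `x` occurs exactly twice)
occurrence of `x` in `v`. -/
def secondOcc (v : List ℕ) (x : ℕ) : ℕ := v.length - 1 - v.reverse.idxOf x

/-- `v` is a tree representation on `{1,…,n}`: it has length `2n`, entries in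
`{1,…,n}`, every `i ∈ {1,…,n}` occurs exactly twice, the first entry is `1`,
for every `i ∈ {2,…,n}` the first occurrence of `i` appears strictly before the
second occurrence of `i-1`, and the second occurrence of `i` appears strictly
after the second occurrence of `i-1`. -/
def IsTreeRep (n : ℕ) (v : List ℕ) : Prop :=
  v.length = 2 * n ∧
  (∀ x ∈ v, 1 ≤ x ∧ x ≤ n) ∧
  (∀ i, 1 ≤ i → i ≤ n → v.count i = 2) ∧
  v.getD 0 0 = 1 ∧
  (∀ i, 2 ≤ i → i ≤ n → firstOcc v i < secondOcc v (i - 1)) ∧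
  (∀ i, 2 ≤ i → i ≤ n → secondOcc v (i - 1) < secondOcc v i)

/-- `v_j` (0-indexed) is the first occurrence of its value in `v`. -/
def isFirstAt (v : List ℕ) (j : ℕ) : Bool := v.idxOf (v.getD j 0) == j

/-- The edge produced by step `j` (0-indexed, corresponding to the pair of
consecutive entries `v_j, v_{j+1}`) of the decoding algorithm: writing `a, b`
for the values of these two entries, it is `{n+a, n+b}` if both are first
occurrences, `{n+a, b}` if only the first is, `{n+v_{j'}, n+b}` (where `j'` is
the smallest index `> j+1` whose entry is a second occurrence) if only the
second is, and `{n+b, b}` if both are second occurrences. -/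
noncomputable def decodeEdge (n : ℕ) (v : List ℕ) (j : ℕ) : Sym2 ℕ :=
  let a := v.getD j 0
  let b := v.getD (j + 1) 0
  if isFirstAt v j then
    if isFirstAt v (j + 1) then s(n + a, n + b) else s(n + a, b)
  else
    if isFirstAt v (j + 1) then
      s(n + v.getD (sInf {k | j + 1 < k ∧ k < v.length ∧ isFirstAt v k = false}) 0, n + b)
    else s(n + b, b)

/-- The edge set of the graph `G(v)` produced by the decoding algorithm. -/
noncomputable def decodeEdges (n : ℕ) (v : List ℕ) : Finset (Sym2 ℕ) :=
  (Finset.range (2 * n - 1)).image (decodeEdge n v)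

/-- The graph `G(v)` produced by the decoding algorithm (as a simple graph on
`ℕ`; its relevant vertices are `{1,…,2n}`). -/
noncomputable def decodeGraph (n : ℕ) (v : List ℕ) : SimpleGraph ℕ :=
  SimpleGraph.fromEdgeSet ↑(decodeEdges n v)

/-!
Number the positions `0, …, 2n-1` of `v`. Position `k` creates one vertex: the internal vertex
`n + v_k` if it holds the first occurrence of `v_k`, the leaf `v_k` otherwise; this is a
bijection onto `{1, …, 2n}` sending position `0` to `n + 1`. Since the second occurrences appear
in the order `1, …, n`, step `j` of the decoding joins the vertex created at position `j + 1` to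
`n + p`, where `p = v_j` if `v_j` is a first occurrence and `p = v_j + 1` otherwise, and the first
occurrence of `p` lies at or before position `j`. So every vertex except `n + 1` has exactly one
edge to a vertex created earlier: the `2n - 1` edges are distinct, every vertex reaches `n + 1`,
and each leaf and `n + 1` lies on exactly one edge.
-/

section Occurrences

variable {l : List ℕ} {x k : ℕ}

theorem getD_mem_of_lt (hk : k < l.length) : l.getD k 0 ∈ l :=
  List.getD_eq_getElem _ _ hk ▸ List.getElem_mem hk

theorem firstOcc_lt_iff_mem_take (hx : x ∈ l) : firstOcc l x < k ↔ x ∈ l.take k :=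
  (List.mem_take_iff_idxOf_lt hx).symm

theorem le_secondOcc_iff_mem_drop (hx : x ∈ l) : k ≤ secondOcc l x ↔ x ∈ l.drop k := by
  have hrev : l.drop k = (l.reverse.take (l.length - k)).reverse := by
    simpa using (List.drop_reverse (xs := l.reverse) (i := k))
  have hlt : l.reverse.idxOf x < l.length := by
    simpa using List.idxOf_lt_length_of_mem (List.mem_reverse.2 hx)
  rw [hrev, List.mem_reverse, List.mem_take_iff_idxOf_lt (List.mem_reverse.2 hx), secondOcc]
  omega

theorem firstOcc_lt_length (hx : x ∈ l) : firstOcc l x < l.length :=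
  List.idxOf_lt_length_of_mem hx

theorem getD_firstOcc (hx : x ∈ l) : l.getD (firstOcc l x) 0 = x := by
  rw [List.getD_eq_getElem _ _ (firstOcc_lt_length hx)]
  exact List.getElem_idxOf _

theorem secondOcc_lt_length (hx : x ∈ l) : secondOcc l x < l.length := by
  have := List.length_pos_of_mem hx
  unfold secondOcc
  omega

theorem getD_secondOcc (hx : x ∈ l) : l.getD (secondOcc l x) 0 = x := by
  have hlt : l.reverse.idxOf x < l.reverse.length :=
    List.idxOf_lt_length_of_mem (List.mem_reverse.2 hx)
  have h := List.getElem_idxOf hlt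
  rw [List.getElem_reverse] at h
  rw [List.getD_eq_getElem _ _ (secondOcc_lt_length hx)]
  exact h

theorem firstOcc_le_of_getD_eq (hk : k < l.length) (h : l.getD k 0 = x) : firstOcc l x ≤ k := by
  have hx : x ∈ l := h ▸ getD_mem_of_lt hk
  rw [Nat.le_iff_lt_add_one, firstOcc_lt_iff_mem_take hx, List.mem_take_iff_getElem]
  exact ⟨k, by omega, by rwa [List.getD_eq_getElem _ _ hk] at h⟩

theorem le_secondOcc_of_getD_eq (hk : k < l.length) (h : l.getD k 0 = x) : k ≤ secondOcc l x := by
  have hx : x ∈ l := h ▸ getD_mem_of_lt hk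
  rw [le_secondOcc_iff_mem_drop hx, List.drop_eq_getElem_cons hk]
  rw [List.getD_eq_getElem _ _ hk] at h
  simp [h]

theorem count_eq_count_take_add_count_drop (hk : k < l.length) (h : l.getD k 0 = x) :
    l.count x = (l.take k).count x + (l.drop (k + 1)).count x + 1 := by
  rw [List.getD_eq_getElem _ _ hk] at h
  conv_lhs => rw [← List.take_append_drop k l, List.drop_eq_getElem_cons hk]
  simp only [h, List.count_append, List.count_cons_self]
  omega

theorem eq_firstOcc_or_eq_secondOcc (h2 : l.count x = 2) (hk : k < l.length)
    (h : l.getD k 0 = x) : k = firstOcc l x ∨ k = secondOcc l x := by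
  have hx : x ∈ l := List.count_pos_iff.1 (by omega)
  have hF := firstOcc_le_of_getD_eq hk h
  have hS := le_secondOcc_of_getD_eq hk h
  have hsplit := count_eq_count_take_add_count_drop hk h
  by_contra! hne
  have htake : 0 < (l.take k).count x :=
    List.count_pos_iff.2 ((firstOcc_lt_iff_mem_take hx).1 (by omega))
  have hdrop : 0 < (l.drop (k + 1)).count x :=
    List.count_pos_iff.2 ((le_secondOcc_iff_mem_drop hx).1 (by omega))
  omega

theorem firstOcc_lt_secondOcc (h2 : l.count x = 2) : firstOcc l x < secondOcc l x := by
  have hx : x ∈ l := List.count_pos_iff.1 (by omega)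
  have hsplit := count_eq_count_take_add_count_drop (firstOcc_lt_length hx)
    (getD_firstOcc hx)
  have htake : (l.take (firstOcc l x)).count x = 0 :=
    List.count_eq_zero.2 fun hmem => (lt_irrefl _) ((firstOcc_lt_iff_mem_take hx).2 hmem)
  have hdrop : x ∈ l.drop (firstOcc l x + 1) := List.count_pos_iff.1 (by omega)
  exact (le_secondOcc_iff_mem_drop hx).2 hdrop

end Occurrences

theorem SimpleGraph.reachable_of_forall_exists_adj_lt {α : Type*} {G : SimpleGraph α} {S : Set α}
    {r : α → ℕ} {root : α} (h : ∀ x ∈ S, x ≠ root → ∃ y ∈ S, r y < r x ∧ G.Adj x y) :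
    ∀ x ∈ S, G.Reachable x root := by
  intro x
  induction hx : r x using Nat.strong_induction_on generalizing x with
  | _ m ih =>
    intro hxS
    by_cases hroot : x = root
    · exact hroot ▸ SimpleGraph.Reachable.refl _
    obtain ⟨y, hyS, hlt, hadj⟩ := h x hxS hroot
    exact hadj.reachable.trans (ih _ (hx ▸ hlt) y rfl hyS)

theorem Finset.card_filter_image_eq_one {ι β : Type*} [DecidableEq β] {s : Finset ι}
    {f : ι → β} {p : β → Prop} [DecidablePred p] {i : ι} (hi : i ∈ s) (hpi : p (f i))
    (huniq : ∀ j ∈ s, p (f j) → j = i) : ((s.image f).filter p).card = 1 := by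
  refine Finset.card_eq_one.2 ⟨f i, Finset.eq_singleton_iff_unique_mem.2
    ⟨Finset.mem_filter.2 ⟨Finset.mem_image_of_mem f hi, hpi⟩, fun b hb => ?_⟩⟩
  obtain ⟨hb, hpb⟩ := Finset.mem_filter.1 hb
  obtain ⟨j, hj, rfl⟩ := Finset.mem_image.1 hb
  rw [huniq j hj hpb]

theorem isFirstAt_iff {v : List ℕ} {k : ℕ} :
    isFirstAt v k = true ↔ firstOcc v (v.getD k 0) = k := by
  simp [isFirstAt, firstOcc]

namespace IsTreeRep

variable {n : ℕ} {v : List ℕ} {x k : ℕ}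

theorem one_le (hv : IsTreeRep n v) : 1 ≤ n := by
  obtain ⟨hlen, -, -, h0, -⟩ := hv
  by_contra! hn
  simp_all [List.length_eq_zero_iff]

theorem getD_mem_Icc (hv : IsTreeRep n v) (hk : k < 2 * n) : 1 ≤ v.getD k 0 ∧ v.getD k 0 ≤ n :=
  hv.2.1 _ (getD_mem_of_lt (hv.1 ▸ hk))

theorem mem (hv : IsTreeRep n v) (h1 : 1 ≤ x) (h2 : x ≤ n) : x ∈ v :=
  List.count_pos_iff.1 (by rw [hv.2.2.1 x h1 h2]; omega)

theorem firstOcc_lt_secondOcc (hv : IsTreeRep n v) (h1 : 1 ≤ x) (h2 : x ≤ n) :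
    firstOcc v x < secondOcc v x :=
  _root_.firstOcc_lt_secondOcc (hv.2.2.1 x h1 h2)

theorem secondOcc_lt (hv : IsTreeRep n v) (h1 : 1 ≤ x) (h2 : x ≤ n) : secondOcc v x < 2 * n :=
  hv.1 ▸ secondOcc_lt_length (hv.mem h1 h2)

theorem eq_secondOcc_of_isFirstAt_eq_false (hv : IsTreeRep n v) (hk : k < 2 * n)
    (h : isFirstAt v k = false) : secondOcc v (v.getD k 0) = k := by
  obtain ⟨h1, h2⟩ := hv.getD_mem_Icc hk
  rcases eq_firstOcc_or_eq_secondOcc (hv.2.2.1 _ h1 h2) (hv.1 ▸ hk) rfl with hF | hS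
  · exact absurd (isFirstAt_iff.2 hF.symm) (by simp [h])
  · exact hS.symm

theorem isFirstAt_secondOcc (hv : IsTreeRep n v) (h1 : 1 ≤ x) (h2 : x ≤ n) :
    isFirstAt v (secondOcc v x) = false := by
  have := hv.firstOcc_lt_secondOcc h1 h2
  rw [Bool.eq_false_iff, ne_eq, isFirstAt_iff, getD_secondOcc (hv.mem h1 h2)]
  omega

theorem secondOcc_strictMonoOn (hv : IsTreeRep n v) : StrictMonoOn (secondOcc v) (Set.Icc 1 n) :=
  strictMonoOn_of_lt_add_one Set.ordConnected_Icc fun a _ ha ha' => by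
    have := hv.2.2.2.2.2 (a + 1) (by simp only [Set.mem_Icc] at ha; omega) ha'.2
    simpa using this

theorem secondOcc_le_secondOcc (hv : IsTreeRep n v) {a b : ℕ} (ha : 1 ≤ a) (hab : a ≤ b)
    (hb : b ≤ n) : secondOcc v a ≤ secondOcc v b :=
  hv.secondOcc_strictMonoOn.monotoneOn ⟨ha, by omega⟩ ⟨by omega, hb⟩ hab

theorem firstOcc_one (hv : IsTreeRep n v) : firstOcc v 1 = 0 :=
  Nat.le_zero.1 (firstOcc_le_of_getD_eq (by rw [hv.1]; linarith [hv.one_le]) hv.2.2.2.1)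

theorem secondOcc_n (hv : IsTreeRep n v) : secondOcc v n = 2 * n - 1 := by
  have hn := hv.one_le
  have hk : 2 * n - 1 < 2 * n := by omega
  obtain ⟨h1, h2⟩ := hv.getD_mem_Icc hk
  have hlast : isFirstAt v (2 * n - 1) = false := by
    rw [Bool.eq_false_iff, ne_eq, isFirstAt_iff]
    have := hv.firstOcc_lt_secondOcc h1 h2
    have := hv.secondOcc_lt h1 h2
    omega
  have := hv.eq_secondOcc_of_isFirstAt_eq_false hk hlast
  have := hv.secondOcc_le_secondOcc h1 h2 le_rfl
  have := hv.secondOcc_lt hn le_rfl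
  omega

theorem secondOcc_succ_le (hv : IsTreeRep n v) {d : ℕ} (hd : d + 1 ≤ n) (hdk : secondOcc v d < k)
    (hk : k < 2 * n) (h : isFirstAt v k = false) : secondOcc v (d + 1) ≤ k := by
  obtain ⟨h1, h2⟩ := hv.getD_mem_Icc hk
  have hkS := hv.eq_secondOcc_of_isFirstAt_eq_false hk h
  have hdc : d < v.getD k 0 := by
    by_contra! hcd
    have := hv.secondOcc_le_secondOcc h1 hcd (by omega)
    omega
  rw [← hkS]
  exact hv.secondOcc_le_secondOcc (by omega) hdc h2

theorem getD_lt_of_isFirstAt_eq_false (hv : IsTreeRep n v) {j : ℕ} (hj : j < 2 * n - 1)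
    (h : isFirstAt v j = false) : v.getD j 0 < n := by
  have hjS := hv.eq_secondOcc_of_isFirstAt_eq_false (by omega) h
  by_contra! hn
  have hvn : v.getD j 0 = n := le_antisymm (hv.getD_mem_Icc (by omega)).2 hn
  rw [hvn, hv.secondOcc_n] at hjS
  omega

end IsTreeRep

def vertexAt (n : ℕ) (v : List ℕ) (k : ℕ) : ℕ :=
  if isFirstAt v k then n + v.getD k 0 else v.getD k 0

def vertexPos (n : ℕ) (v : List ℕ) (x : ℕ) : ℕ :=
  if x ≤ n then secondOcc v x else firstOcc v (x - n)

def parentLabel (v : List ℕ) (j : ℕ) : ℕ :=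
  if isFirstAt v j then v.getD j 0 else v.getD j 0 + 1

namespace IsTreeRep

variable {n : ℕ} {v : List ℕ} {x j k : ℕ}

theorem vertexPos_vertexAt (hv : IsTreeRep n v) (hk : k < 2 * n) :
    vertexPos n v (vertexAt n v k) = k := by
  obtain ⟨h1, h2⟩ := hv.getD_mem_Icc hk
  unfold vertexAt vertexPos
  cases h : isFirstAt v k
  · simp only [Bool.false_eq_true, if_false, if_pos h2]
    exact hv.eq_secondOcc_of_isFirstAt_eq_false hk h
  · simp only [if_true, if_neg (show ¬ n + v.getD k 0 ≤ n by omega), Nat.add_sub_cancel_left]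
    exact isFirstAt_iff.1 h

theorem vertexAt_vertexPos (hv : IsTreeRep n v) (hx : x ∈ Finset.Icc 1 (2 * n)) :
    vertexAt n v (vertexPos n v x) = x := by
  rw [Finset.mem_Icc] at hx
  by_cases hxn : x ≤ n
  · simp only [vertexAt, vertexPos, if_pos hxn, hv.isFirstAt_secondOcc hx.1 hxn,
      Bool.false_eq_true, if_false, getD_secondOcc (hv.mem hx.1 hxn)]
  · have hmem := hv.mem (x := x - n) (by omega) (by omega)
    have hfirst : isFirstAt v (firstOcc v (x - n)) = true := by
      rw [isFirstAt_iff, getD_firstOcc hmem]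
    simp only [vertexAt, vertexPos, hxn, if_false, hfirst, if_true, getD_firstOcc hmem]
    omega

theorem vertexAt_mem_Icc (hv : IsTreeRep n v) (hk : k < 2 * n) :
    vertexAt n v k ∈ Finset.Icc 1 (2 * n) := by
  obtain ⟨h1, h2⟩ := hv.getD_mem_Icc hk
  rw [Finset.mem_Icc]
  unfold vertexAt
  split <;> omega

theorem vertexPos_lt (hv : IsTreeRep n v) (hx : x ∈ Finset.Icc 1 (2 * n)) :
    vertexPos n v x < 2 * n := by
  rw [Finset.mem_Icc] at hx
  unfold vertexPos
  split
  · exact hv.secondOcc_lt hx.1 ‹_›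
  · exact hv.1 ▸ firstOcc_lt_length (hv.mem (by omega) (by omega))

theorem isFirstAt_zero (hv : IsTreeRep n v) : isFirstAt v 0 = true := by
  rw [isFirstAt_iff, hv.2.2.2.1, hv.firstOcc_one]

theorem vertexAt_zero (hv : IsTreeRep n v) : vertexAt n v 0 = n + 1 := by
  rw [vertexAt, if_pos hv.isFirstAt_zero, hv.2.2.2.1]

theorem parentLabel_mem_Icc (hv : IsTreeRep n v) (hj : j < 2 * n - 1) :
    1 ≤ parentLabel v j ∧ parentLabel v j ≤ n := by
  obtain ⟨h1, h2⟩ := hv.getD_mem_Icc (k := j) (by omega)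
  unfold parentLabel
  cases h : isFirstAt v j
  · have := hv.getD_lt_of_isFirstAt_eq_false hj h
    simp only [Bool.false_eq_true, if_false]
    omega
  · simpa using ⟨h1, h2⟩

theorem firstOcc_parentLabel_le (hv : IsTreeRep n v) (hj : j < 2 * n - 1) :
    firstOcc v (parentLabel v j) ≤ j := by
  unfold parentLabel
  cases h : isFirstAt v j
  · have hlt := hv.getD_lt_of_isFirstAt_eq_false hj h
    have hjS := hv.eq_secondOcc_of_isFirstAt_eq_false (by omega) h
    have := hv.2.2.2.2.1 (v.getD j 0 + 1) (by linarith [(hv.getD_mem_Icc (k := j) (by omega)).1])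
      (by omega)
    simp only [Bool.false_eq_true, if_false]
    simp only [Nat.add_sub_cancel] at this
    omega
  · simpa using (isFirstAt_iff.1 h).le

theorem vertexPos_parent_le (hv : IsTreeRep n v) (hj : j < 2 * n - 1) :
    vertexPos n v (n + parentLabel v j) ≤ j := by
  have := hv.parentLabel_mem_Icc hj
  simpa [vertexPos, show ¬ n + parentLabel v j ≤ n by omega] using hv.firstOcc_parentLabel_le hj

theorem parentLabel_eq_one_iff (hv : IsTreeRep n v) (hj : j < 2 * n - 1) :
    parentLabel v j = 1 ↔ j = 0 := by
  constructor
  · intro h1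
    have := hv.firstOcc_parentLabel_le hj
    unfold parentLabel at h1
    cases h : isFirstAt v j
    · have := (hv.getD_mem_Icc (k := j) (by omega)).1
      simp only [h, Bool.false_eq_true, if_false] at h1
      omega
    · simp only [h, if_true] at h1
      rw [← isFirstAt_iff.1 h, h1, hv.firstOcc_one]
  · rintro rfl
    rw [parentLabel, if_pos hv.isFirstAt_zero, hv.2.2.2.1]

theorem lt_secondOcc_succ (hv : IsTreeRep n v) (hj : j < 2 * n - 1) (h : isFirstAt v j = false) :
    j < secondOcc v (v.getD j 0 + 1) := by
  have hlt := hv.getD_lt_of_isFirstAt_eq_false hj h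
  have h1 := (hv.getD_mem_Icc (k := j) (by omega)).1
  have := hv.secondOcc_strictMonoOn ⟨h1, hlt.le⟩ ⟨by omega, hlt⟩ (Nat.lt_succ_self _)
  rwa [hv.eq_secondOcc_of_isFirstAt_eq_false (by omega) h] at this

theorem getD_succ_of_isFirstAt_eq_false (hv : IsTreeRep n v) (hj : j < 2 * n - 1)
    (h : isFirstAt v j = false) (h' : isFirstAt v (j + 1) = false) :
    v.getD (j + 1) 0 = v.getD j 0 + 1 := by
  have hlt := hv.getD_lt_of_isFirstAt_eq_false hj h
  have hgt := hv.lt_secondOcc_succ hj h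
  have hle := hv.secondOcc_succ_le hlt
    (by rw [hv.eq_secondOcc_of_isFirstAt_eq_false (by omega) h]; omega) (by omega) h'
  rw [show j + 1 = secondOcc v (v.getD j 0 + 1) by omega,
    getD_secondOcc (hv.mem (by omega) hlt)]

theorem sInf_eq_secondOcc_succ (hv : IsTreeRep n v) (hj : j < 2 * n - 1)
    (h : isFirstAt v j = false) (h' : isFirstAt v (j + 1) = true) :
    sInf {k | j + 1 < k ∧ k < v.length ∧ isFirstAt v k = false} =
      secondOcc v (v.getD j 0 + 1) := by
  have hlt := hv.getD_lt_of_isFirstAt_eq_false hj h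
  have hjS := hv.eq_secondOcc_of_isFirstAt_eq_false (by omega) h
  have hgt := hv.lt_secondOcc_succ hj h
  have hS1 := hv.isFirstAt_secondOcc (x := v.getD j 0 + 1) (by omega) hlt
  have hmem : secondOcc v (v.getD j 0 + 1) ∈
      {k | j + 1 < k ∧ k < v.length ∧ isFirstAt v k = false} := by
    refine ⟨lt_of_le_of_ne hgt fun heq => ?_, hv.1 ▸ hv.secondOcc_lt (by omega) hlt, hS1⟩
    rw [← heq, h'] at hS1
    exact Bool.noConfusion hS1
  refine le_antisymm (Nat.sInf_le hmem) (le_csInf ⟨_, hmem⟩ ?_)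
  rintro k ⟨hjk, hk, hkf⟩
  exact hv.secondOcc_succ_le hlt (by omega) (hv.1 ▸ hk) hkf

theorem decodeEdge_eq (hv : IsTreeRep n v) (hj : j < 2 * n - 1) :
    decodeEdge n v j = s(n + parentLabel v j, vertexAt n v (j + 1)) := by
  unfold decodeEdge parentLabel vertexAt
  cases h : isFirstAt v j <;> cases h' : isFirstAt v (j + 1) <;>
    simp only [Bool.false_eq_true, if_false, if_true]
  · rw [hv.getD_succ_of_isFirstAt_eq_false hj h h']
  · rw [hv.sInf_eq_secondOcc_succ hj h h',
      getD_secondOcc (hv.mem (by omega) (hv.getD_lt_of_isFirstAt_eq_false hj h))]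

theorem vertexPos_root (hv : IsTreeRep n v) : vertexPos n v (n + 1) = 0 := by
  rw [← hv.vertexAt_zero, hv.vertexPos_vertexAt (by linarith [hv.one_le])]

theorem mem_decodeEdge (hv : IsTreeRep n v) (hj : j < 2 * n - 1) (hx : x ∈ decodeEdge n v j) :
    x = n + parentLabel v j ∨ x = vertexAt n v (j + 1) := by
  rwa [hv.decodeEdge_eq hj, Sym2.mem_iff] at hx

theorem mem_Icc_of_mem_decodeEdges (hv : IsTreeRep n v) {e : Sym2 ℕ} (he : e ∈ decodeEdges n v)
    (hx : x ∈ e) : x ∈ Finset.Icc 1 (2 * n) := by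
  obtain ⟨j, hj, rfl⟩ := Finset.mem_image.1 he
  have hj : j < 2 * n - 1 := Finset.mem_range.1 hj
  rcases hv.mem_decodeEdge hj hx with rfl | rfl
  · have := hv.parentLabel_mem_Icc hj
    rw [Finset.mem_Icc]
    omega
  · exact hv.vertexAt_mem_Icc (by omega)

theorem decodeGraph_adj (hv : IsTreeRep n v) (hj : j < 2 * n - 1) :
    (decodeGraph n v).Adj (vertexAt n v (j + 1)) (n + parentLabel v j) := by
  have hpos := hv.vertexPos_vertexAt (k := j + 1) (by omega)
  have hpar := hv.vertexPos_parent_le hj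
  rw [decodeGraph, SimpleGraph.fromEdgeSet_adj]
  refine ⟨Finset.mem_image.2 ⟨j, Finset.mem_range.2 hj, ?_⟩, fun heq => ?_⟩
  · rw [hv.decodeEdge_eq hj, Sym2.eq_swap]
  · rw [heq] at hpos
    omega

theorem reachable_root (hv : IsTreeRep n v) (hx : x ∈ Finset.Icc 1 (2 * n)) :
    (decodeGraph n v).Reachable x (n + 1) := by
  refine SimpleGraph.reachable_of_forall_exists_adj_lt (S := ↑(Finset.Icc 1 (2 * n)))
    (r := vertexPos n v) (fun y hy hne => ?_) x hx
  have hyPos := hv.vertexAt_vertexPos hy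
  have hlt := hv.vertexPos_lt hy
  have hpos : vertexPos n v y ≠ 0 := fun h0 => hne (by rw [← hyPos, h0, hv.vertexAt_zero])
  have hj : vertexPos n v y - 1 < 2 * n - 1 := by omega
  have hpar := hv.parentLabel_mem_Icc hj
  refine ⟨n + parentLabel v (vertexPos n v y - 1), ?_, ?_, ?_⟩
  · simp only [Finset.coe_Icc, Set.mem_Icc]
    omega
  · have := hv.vertexPos_parent_le hj
    omega
  · have := hv.decodeGraph_adj hj
    rwa [Nat.sub_add_cancel (Nat.one_le_iff_ne_zero.2 hpos), hyPos] at this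

theorem decodeEdge_injOn (hv : IsTreeRep n v) :
    Set.InjOn (decodeEdge n v) (Finset.range (2 * n - 1)) := by
  intro j₁ hj₁ j₂ hj₂ heq
  simp only [Finset.coe_range, Set.mem_Iio] at hj₁ hj₂
  rw [hv.decodeEdge_eq hj₁, hv.decodeEdge_eq hj₂, Sym2.eq_iff] at heq
  have h₁ := hv.vertexPos_vertexAt (k := j₁ + 1) (by omega)
  have h₂ := hv.vertexPos_vertexAt (k := j₂ + 1) (by omega)
  have p₁ := hv.vertexPos_parent_le hj₁
  have p₂ := hv.vertexPos_parent_le hj₂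
  rcases heq with ⟨-, hc⟩ | ⟨hpc, hcp⟩
  · rw [hc] at h₁
    omega
  · rw [hpc] at p₁
    rw [← hcp] at p₂
    omega

theorem card_decodeEdges (hv : IsTreeRep n v) : (decodeEdges n v).card = 2 * n - 1 := by
  rw [decodeEdges, Finset.card_image_of_injOn hv.decodeEdge_injOn, Finset.card_range]

theorem card_filter_mem_decodeEdges_of_le (hv : IsTreeRep n v) (h1 : 1 ≤ x) (hxn : x ≤ n) :
    ((decodeEdges n v).filter fun e => x ∈ e).card = 1 := by
  have hx : x ∈ Finset.Icc 1 (2 * n) := Finset.mem_Icc.2 ⟨h1, by omega⟩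
  have hxPos := hv.vertexAt_vertexPos hx
  have hlt := hv.vertexPos_lt hx
  have hpos : vertexPos n v x ≠ 0 := fun h0 => by
    rw [h0, hv.vertexAt_zero] at hxPos
    omega
  refine Finset.card_filter_image_eq_one (i := vertexPos n v x - 1)
    (Finset.mem_range.2 (by omega)) ?_ fun j hj hxj => ?_
  · rw [hv.decodeEdge_eq (by omega), Nat.sub_add_cancel (Nat.one_le_iff_ne_zero.2 hpos), hxPos]
    exact Sym2.mem_mk_right _ _
  · have hj : j < 2 * n - 1 := Finset.mem_range.1 hj
    rcases hv.mem_decodeEdge hj hxj with h | h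
    · linarith [(hv.parentLabel_mem_Icc hj).1]
    · rw [h, hv.vertexPos_vertexAt (by omega)]
      omega

theorem card_filter_root_mem_decodeEdges (hv : IsTreeRep n v) :
    ((decodeEdges n v).filter fun e => n + 1 ∈ e).card = 1 := by
  have hn := hv.one_le
  refine Finset.card_filter_image_eq_one (i := 0) (Finset.mem_range.2 (by omega)) ?_
    fun j hj hxj => ?_
  · rw [hv.decodeEdge_eq (by omega), (hv.parentLabel_eq_one_iff (by omega)).2 rfl]
    exact Sym2.mem_mk_left _ _
  · have hj : j < 2 * n - 1 := Finset.mem_range.1 hj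
    rcases hv.mem_decodeEdge hj hxj with h | h
    · exact (hv.parentLabel_eq_one_iff hj).1 (by omega)
    · have := congrArg (vertexPos n v) h
      rw [hv.vertexPos_root, hv.vertexPos_vertexAt (by omega)] at this
      omega

theorem card_filter_mem_decodeEdges (hv : IsTreeRep n v) (hx : x ∈ Finset.Icc 1 (n + 1)) :
    ((decodeEdges n v).filter fun e => x ∈ e).card = 1 := by
  rw [Finset.mem_Icc] at hx
  rcases Nat.lt_or_ge n x with hxn | hxn
  · obtain rfl : x = n + 1 := by omega
    exact hv.card_filter_root_mem_decodeEdges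
  · exact hv.card_filter_mem_decodeEdges_of_le hx.1 hxn

end IsTreeRep

theorem stmt16_general (n : ℕ) (v : List ℕ) (hv : IsTreeRep n v) :
    (∀ e ∈ decodeEdges n v, ∀ x ∈ e, x ∈ Finset.Icc 1 (2 * n)) ∧
    (∀ x ∈ Finset.Icc 1 (2 * n), ∀ y ∈ Finset.Icc 1 (2 * n),
      (decodeGraph n v).Reachable x y) ∧
    (decodeEdges n v).card = 2 * n - 1 ∧
    (∀ x ∈ Finset.Icc 1 (n + 1), ((decodeEdges n v).filter fun e => x ∈ e).card = 1) :=
  ⟨fun _ he _ hx => hv.mem_Icc_of_mem_decodeEdges he hx,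
    fun _ hx _ hy => (hv.reachable_root hx).trans (hv.reachable_root hy).symm,
    hv.card_decodeEdges,
    fun _ hx => hv.card_filter_mem_decodeEdges hx⟩

/-- For `n ≥ 2` and a tree representation `v` on `{1,…,n}`, the graph `G(v)`
produced by the decoding algorithm, with vertex set `{1,…,2n}`, is a tree: all
its edges join vertices of `{1,…,2n}`, any two vertices of `{1,…,2n}` are
connected, and it has exactly `2n−1` edges; moreover each of the vertices
`1,…,n` and the vertex `n+1` has degree `1`. -/
theorem stmt16 (n : ℕ) (hn : 2 ≤ n) (v : List ℕ) (hv : IsTreeRep n v) :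
    (∀ e ∈ decodeEdges n v, ∀ x ∈ e, x ∈ Finset.Icc 1 (2 * n)) ∧
    (∀ x ∈ Finset.Icc 1 (2 * n), ∀ y ∈ Finset.Icc 1 (2 * n),
      (decodeGraph n v).Reachable x y) ∧
    (decodeEdges n v).card = 2 * n - 1 ∧
    (∀ x ∈ Finset.Icc 1 (n + 1), ((decodeEdges n v).filter fun e => x ∈ e).card = 1) :=
  stmt16_general n v hv
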